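/- Under the SPDHG setup, assume g and all f_i are convex, θ = 1, the samplings 𝕊^{(k)} are i.i.d. copies of a proper sampling 𝕊, and the step size operators T, S are chosen so that there exist ESO parameters {v_i} of S^{1/2} A T^{1/2} with respect to 𝕊 satisfying v_i < p_i for all i = 1,…,n. Let w♯ = (x♯, y♯) be any saddle point, h(w) = g(x) + f*(y) and q = (−A* y♯, A x♯) ∈ ∂h(w♯). Then the Bregman distance between the SPDHG iterates w^{(k)} = (x^{(k)}, y^{(k)}) and w♯ converges to zero almost surely: D_h^q(w^{(k)}, w♯) → 0 a.s. -/

import Mathlib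

/-!
With `d = ȳ - y`, consider the Lyapunov function
`Φ(x, y, d) = ½‖x - x♯‖²_{T⁻¹} + D_g(x) + ∑ᵢ [pᵢ⁻¹ (½‖yᵢ - y♯ᵢ‖²_{Sᵢ⁻¹} + D_{fᵢ*}(yᵢ))
  - ⟪Aᵢ (x - x♯), dᵢ⟫ + pᵢ/2 ‖dᵢ‖²_{Sᵢ⁻¹}]`.
The three-point inequalities of the two proximal steps, averaged over the sampled set, show that
one SPDHG iteration lowers `Φ` in conditional expectation by at least `D_h^q(w^{(k)}, w♯)`, up to
the error `½‖T^{1/2} A* d‖² - ∑ᵢ pᵢ/2 ‖dᵢ‖²_{Sᵢ⁻¹}` left by Young's inequality on the extrapolation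
coupling. The ESO condition with `vᵢ ≤ pᵢ` makes this error nonpositive on average, and Young's
inequality again shows that `Φ` plus the error is nonnegative. Hence the expected Bregman
distances are summable, and Markov's inequality on cylinder sets with Borel–Cantelli gives
almost sure convergence to zero.
-/

open scoped RealInnerProductSpace
open MeasureTheory

/-- A history of `k` sampled subsets of `{1,…,n}` (the sets `𝕊^{(1)},…,𝕊^{(k)}`). -/
abbrev Hist (n k : ℕ) := Fin k → Finset (Fin n)

/-- Restriction of a history of length `k+1` to its first `k` entries. -/
def histRes {n k : ℕ} (s : Hist n (k + 1)) : Hist n k := fun j => s j.castSucc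

/-- Probability of a history, for i.i.d. samplings with distribution `P`. -/
noncomputable def histProb {n : ℕ} (P : Finset (Fin n) → ℝ) {k : ℕ} (s : Hist n k) : ℝ :=
  ∏ j, P (s j)

/-- Probability that index `i` belongs to the random set, for the sampling distribution `P`. -/
noncomputable def probOf {n : ℕ} (P : Finset (Fin n) → ℝ) (i : Fin n) : ℝ :=
  ∑ R : Finset (Fin n), if i ∈ R then P R else 0

/-- `x` is the proximal point `prox_B^f(z)` for the step size operator `B` with inverse
`Binv`, i.e. the minimizer of `u ↦ ½‖u − z‖²_{B⁻¹} + f(u)`. -/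
def IsProx {E : Type*} [NormedAddCommGroup E] [InnerProductSpace ℝ E]
    (Binv : E →L[ℝ] E) (f : E → ℝ) (z x : E) : Prop :=
  ∀ u : E, (1 / 2) * ⟪Binv (x - z), x - z⟫ + f x ≤ (1 / 2) * ⟪Binv (u - z), u - z⟫ + f u

section Operators

variable {E : Type*} [NormedAddCommGroup E] [InnerProductSpace ℝ E]

theorem inner_map_sub_comm (B : E →L[ℝ] E) (a b : E) :
    ⟪B (a - b), a - b⟫ = ⟪B (b - a), b - a⟫ := by
  rw [← neg_sub b a, map_neg, inner_neg_neg]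

theorem inner_map_self_pos_of_rightInverse {B Binv : E →L[ℝ] E}
    (hBpos : ∀ u, u ≠ 0 → 0 < ⟪B u, u⟫) (hinv : ∀ u, B (Binv u) = u) {u : E} (hu : u ≠ 0) :
    0 < ⟪Binv u, u⟫ := by
  have hBinv : Binv u ≠ 0 := fun h => hu (by rw [← hinv u, h, map_zero])
  calc 0 < ⟪B (Binv u), Binv u⟫ := hBpos _ hBinv
    _ = ⟪Binv u, u⟫ := by rw [hinv, real_inner_comm]

theorem inner_map_self_nonneg_of_pos {B : E →L[ℝ] E} (hBpos : ∀ u, u ≠ 0 → 0 < ⟪B u, u⟫)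
    (u : E) : 0 ≤ ⟪B u, u⟫ := by
  rcases eq_or_ne u 0 with rfl | hu
  · simp
  · exact (hBpos u hu).le

variable [CompleteSpace E]

theorem IsSelfAdjoint.inner_map_left {B : E →L[ℝ] E} (hB : IsSelfAdjoint B) (u v : E) :
    ⟪B u, v⟫ = ⟪u, B v⟫ :=
  hB.isSymmetric u v

theorem IsSelfAdjoint.inner_map_add_self {B : E →L[ℝ] E} (hB : IsSelfAdjoint B) (a b : E) :
    ⟪B (a + b), a + b⟫ = ⟪B a, a⟫ + 2 * ⟪B a, b⟫ + ⟪B b, b⟫ := by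
  have hba : ⟪B b, a⟫ = ⟪B a, b⟫ := by rw [hB.inner_map_left, real_inner_comm]
  simp only [map_add, inner_add_left, inner_add_right, hba]
  ring

theorem isSelfAdjoint_of_rightInverse {B Binv : E →L[ℝ] E} (hB : IsSelfAdjoint B)
    (hinv : ∀ u, B (Binv u) = u) : IsSelfAdjoint Binv := by
  refine ContinuousLinearMap.isSelfAdjoint_iff_isSymmetric.mpr fun u w => ?_
  calc ⟪Binv u, w⟫ = ⟪Binv u, B (Binv w)⟫ := by rw [hinv]
    _ = ⟪B (Binv u), Binv w⟫ := (hB.inner_map_left _ _).symm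
    _ = ⟪u, Binv w⟫ := by rw [hinv]

theorem norm_map_sq_of_comp_self {R B : E →L[ℝ] E} (hR : IsSelfAdjoint R) (hRR : R.comp R = B)
    (u : E) : ‖R u‖ ^ 2 = ⟪B u, u⟫ := by
  rw [← real_inner_self_eq_norm_sq, hR.inner_map_left, ← hRR, ContinuousLinearMap.comp_apply,
    real_inner_comm]

theorem inner_le_half_inv_add_half_sqrt {T Tsqrt Tinv : E →L[ℝ] E} (hTsqrt : IsSelfAdjoint Tsqrt)
    (hTsq : Tsqrt.comp Tsqrt = T) (hinv : ∀ u, T (Tinv u) = u) (u w : E) :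
    ⟪u, w⟫ ≤ 1 / 2 * ⟪Tinv u, u⟫ + 1 / 2 * ‖Tsqrt w‖ ^ 2 := by
  have hu : ⟪u, w⟫ = ⟪Tsqrt (Tinv u), Tsqrt w⟫ := by
    rw [← hTsqrt.inner_map_left, ← ContinuousLinearMap.comp_apply Tsqrt Tsqrt, hTsq, hinv]
  have hnorm : ‖Tsqrt (Tinv u)‖ ^ 2 = ⟪Tinv u, u⟫ := by
    rw [norm_map_sq_of_comp_self hTsqrt hTsq, hinv, real_inner_comm]
  have := real_inner_le_norm (Tsqrt (Tinv u)) (Tsqrt w)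
  nlinarith [two_mul_le_add_sq ‖Tsqrt (Tinv u)‖ ‖Tsqrt w‖]

end Operators

namespace IsProx

variable {E : Type*} [NormedAddCommGroup E] [InnerProductSpace ℝ E] [CompleteSpace E]
  {B : E →L[ℝ] E} {f : E → ℝ} {z x : E}

theorem sub_le_inner (h : IsProx B f z x) (hB : IsSelfAdjoint B) (hf : ConvexOn ℝ Set.univ f)
    (u : E) : f x - f u ≤ ⟪B (x - z), u - x⟫ := by
  set c := u - x
  -- compare `x` with the points `x + t • c` of the segment towards `u` and let `t → 0⁺`
  have hsmall : ∀ t ∈ Set.Ioo (0 : ℝ) 1, f x - f u ≤ ⟪B (x - z), c⟫ + t / 2 * ⟪B c, c⟫ := by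
    rintro t ⟨ht0, ht1⟩
    have hconv : f (x + t • c) ≤ (1 - t) * f x + t * f u := by
      have := hf.2 (Set.mem_univ x) (Set.mem_univ u) (show (0 : ℝ) ≤ 1 - t by linarith) ht0.le
        (by ring)
      rwa [show (1 - t) • x + t • u = x + t • c by
        simp only [c, smul_sub, sub_smul, one_smul]; abel] at this
    have hmin := h (x + t • c)
    rw [show x + t • c - z = (x - z) + t • c by abel, hB.inner_map_add_self] at hmin
    simp only [map_smul, inner_smul_left, inner_smul_right, RCLike.conj_to_real] at hmin
    have : t * (f x - f u) ≤ t * (⟪B (x - z), c⟫ + t / 2 * ⟪B c, c⟫) := by nlinarith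
    exact le_of_mul_le_mul_left this ht0
  have hlim : Filter.Tendsto (fun t : ℝ => ⟪B (x - z), c⟫ + t / 2 * ⟪B c, c⟫)
      (nhdsWithin 0 (Set.Ioo 0 1)) (nhds ⟪B (x - z), c⟫) :=
    tendsto_nhdsWithin_of_tendsto_nhds <|
      (by fun_prop : Continuous fun t : ℝ => ⟪B (x - z), c⟫ + t / 2 * ⟪B c, c⟫).tendsto' _ _
        (by simp)
  have : (nhdsWithin (0 : ℝ) (Set.Ioo 0 1)).NeBot := left_nhdsWithin_Ioo_neBot zero_lt_one
  exact ge_of_tendsto hlim (eventually_nhdsWithin_of_forall hsmall)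

theorem three_point (h : IsProx B f z x) (hB : IsSelfAdjoint B) (hf : ConvexOn ℝ Set.univ f)
    (u : E) :
    f x + 1 / 2 * ⟪B (x - z), x - z⟫ + 1 / 2 * ⟪B (u - x), u - x⟫
      ≤ f u + 1 / 2 * ⟪B (u - z), u - z⟫ := by
  have hsplit := hB.inner_map_add_self (u - x) (x - z)
  rw [sub_add_sub_cancel, hB.inner_map_left (u - x) (x - z), real_inner_comm (B (x - z))]
    at hsplit
  linarith [h.sub_le_inner hB hf u]

theorem eq (h₁ : IsProx B f z x) {x' : E} (h₂ : IsProx B f z x') (hB : IsSelfAdjoint B)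
    (hBpos : ∀ u, u ≠ 0 → 0 < ⟪B u, u⟫) (hf : ConvexOn ℝ Set.univ f) : x = x' := by
  by_contra hne
  have := hBpos _ (sub_ne_zero.mpr hne)
  linarith [h₁.three_point hB hf x', h₂.three_point hB hf x, inner_map_sub_comm B x x']

theorem three_point_sub_map {T : E →L[ℝ] E} {w : E} (h : IsProx B f (z - T w) x)
    (hB : IsSelfAdjoint B) (hinv : ∀ u, B (T u) = u) (hf : ConvexOn ℝ Set.univ f) (u : E) :
    f x - f u + ⟪x - u, w⟫ ≤ 1 / 2 * ⟪B (z - u), z - u⟫ - 1 / 2 * ⟪B (x - u), x - u⟫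
      - 1 / 2 * ⟪B (x - z), x - z⟫ := by
  have hexp : ∀ a, ⟪B (a - (z - T w)), a - (z - T w)⟫
      = ⟪B (a - z), a - z⟫ + 2 * ⟪a - z, w⟫ + ⟪B (T w), T w⟫ := fun a => by
    rw [sub_sub_eq_add_sub, add_sub_right_comm, hB.inner_map_add_self,
      hB.inner_map_left (a - z) (T w), hinv]
  have := h.three_point hB hf u
  rw [hexp, hexp, inner_map_sub_comm B u x] at this
  have hw : ⟪x - z, w⟫ - ⟪u - z, w⟫ = ⟪x - u, w⟫ := by
    rw [← inner_sub_left, sub_sub_sub_cancel_right]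
  rw [inner_map_sub_comm B u z] at this
  linarith

end IsProx

section Bregman

variable {E : Type*} [NormedAddCommGroup E] [InnerProductSpace ℝ E]

/-- The Bregman distance `D_f^q(u, w)` of `f` at `w` with subgradient `q`. -/
def bregman (f : E → ℝ) (q w u : E) : ℝ := f u - f w - ⟪q, u - w⟫

theorem bregman_nonneg {f : E → ℝ} {q w : E} (h : ∀ u, f w + ⟪q, u - w⟫ ≤ f u) (u : E) :
    0 ≤ bregman f q w u := by
  linarith [h u, show bregman f q w u = f u - f w - ⟪q, u - w⟫ from rfl]

end Bregman

section Block

variable {X Y : Type*} [NormedAddCommGroup X] [InnerProductSpace ℝ X]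
  [NormedAddCommGroup Y] [InnerProductSpace ℝ Y] [CompleteSpace Y]
  (A : X →L[ℝ] Y) (f : Y → ℝ) (Sinv : Y →L[ℝ] Y) (p : ℝ) (xs : X) (ys : Y)

/-- The contribution of one dual block, sampled with probability `p`, to the SPDHG Lyapunov
function at the iterate `(x, y)` with extrapolation offset `d = ȳ - y`. -/
noncomputable def blockLyapunov (x : X) (y d : Y) : ℝ :=
  p⁻¹ * (1 / 2 * ⟪Sinv (y - ys), y - ys⟫ + bregman f (A xs) ys y) - ⟪A (x - xs), d⟫
    + p / 2 * ⟪Sinv d, d⟫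

theorem blockLyapunov_step {S : Y →L[ℝ] Y} {x x' : X} {y ybar yhat : Y}
    (hprox : IsProx Sinv f (y + S (A x')) yhat) (hSinv : IsSelfAdjoint Sinv)
    (hSS : ∀ u, Sinv (S u) = u) (hf : ConvexOn ℝ Set.univ f) (hp : p ≠ 0) :
    p * blockLyapunov A f Sinv p xs ys x' yhat (p⁻¹ • (yhat - y))
        + (1 - p) * blockLyapunov A f Sinv p xs ys x' y 0 + bregman f (A xs) ys y
      ≤ blockLyapunov A f Sinv p xs ys x y (ybar - y) + ⟪A (x' - xs), ybar - ys⟫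
        - ⟪A (x' - x), ybar - y⟫ - p / 2 * ⟪Sinv (ybar - y), ybar - y⟫ := by
  rw [← sub_neg_eq_add, ← map_neg] at hprox
  have hdesc := hprox.three_point_sub_map hSinv hSS hf ys
  have hnew : p * blockLyapunov A f Sinv p xs ys x' yhat (p⁻¹ • (yhat - y))
      = 1 / 2 * ⟪Sinv (yhat - ys), yhat - ys⟫ + bregman f (A xs) ys yhat
        - ⟪A (x' - xs), yhat - y⟫ + 1 / 2 * ⟪Sinv (yhat - y), yhat - y⟫ := by
    simp only [blockLyapunov, map_smul, inner_smul_left, inner_smul_right, RCLike.conj_to_real]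
    field_simp
  have hold : (1 - p) * blockLyapunov A f Sinv p xs ys x' y 0
      = (p⁻¹ - 1) * (1 / 2 * ⟪Sinv (y - ys), y - ys⟫ + bregman f (A xs) ys y) := by
    simp only [blockLyapunov, map_zero, inner_zero_right, mul_zero, sub_zero, add_zero]
    field_simp
  have hcross : ⟪A (x' - xs), ybar - ys⟫ - ⟪A (x' - x), ybar - y⟫ - ⟪A (x - xs), ybar - y⟫
      = ⟪A (x' - xs), y - ys⟫ := by
    simp only [map_sub, inner_sub_left, inner_sub_right]; ring
  have hgrad : ⟪A xs, yhat - ys⟫ + ⟪A (x' - xs), yhat - y⟫ + ⟪A (x' - xs), y - ys⟫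
      = ⟪yhat - ys, A x'⟫ := by
    simp only [map_sub, inner_sub_left, inner_sub_right, real_inner_comm (A x')]; ring
  rw [hnew, hold]
  simp only [blockLyapunov, bregman, inner_neg_right] at hdesc ⊢
  linarith

end Block

section Histories

variable {n : ℕ} (P : Finset (Fin n) → ℝ)

theorem histRes_snoc {k : ℕ} (s : Hist n k) (R : Finset (Fin n)) :
    histRes (Fin.snoc s R : Hist n (k + 1)) = s :=
  funext fun j => Fin.snoc_castSucc (α := fun _ => Finset (Fin n)) _ _ j

theorem histProb_snoc {k : ℕ} (s : Hist n k) (R : Finset (Fin n)) :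
    histProb P (Fin.snoc s R : Hist n (k + 1)) = histProb P s * P R := by
  simp [histProb, Fin.prod_univ_castSucc]

theorem Hist.sum_succ {M : Type*} [AddCommMonoid M] {k : ℕ} (G : Hist n (k + 1) → M) :
    ∑ s, G s = ∑ s : Hist n k, ∑ R, G (Fin.snoc s R) := by
  rw [← Fintype.sum_equiv (Fin.snocEquiv fun _ => Finset (Fin n)) _ G fun _ => rfl,
    Fintype.sum_prod_type, Finset.sum_comm]
  rfl

theorem sum_mul_ite_mem_eq_probOf_mul (i : Fin n) (c : ℝ) :
    ∑ R : Finset (Fin n), P R * (if i ∈ R then c else 0) = probOf P i * c := by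
  simp only [probOf, Finset.sum_mul, mul_ite, mul_zero, ite_mul, zero_mul]

theorem sum_mul_sum_piecewise (hP1 : ∑ R, P R = 1) (a b : Fin n → ℝ) :
    ∑ R, P R * ∑ i, R.piecewise a b i = ∑ i, (probOf P i * a i + (1 - probOf P i) * b i) := by
  have hsplit : ∀ R : Finset (Fin n), ∀ i, R.piecewise a b i
      = b i + if i ∈ R then a i - b i else 0 := fun R i => by
    by_cases hi : i ∈ R <;> simp [Finset.piecewise, hi]
  simp_rw [hsplit, Finset.mul_sum, mul_add]
  rw [Finset.sum_comm]
  refine Finset.sum_congr rfl fun i _ => ?_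
  rw [Finset.sum_add_distrib, ← Finset.sum_mul, hP1, sum_mul_ite_mem_eq_probOf_mul]
  ring

noncomputable def histExpect (k : ℕ) (F : Hist n k → ℝ) : ℝ :=
  ∑ s, histProb P s * F s

theorem histExpect_succ {k : ℕ} (F : Hist n (k + 1) → ℝ) :
    histExpect P (k + 1) F = histExpect P k fun s => ∑ R, P R * F (Fin.snoc s R) := by
  simp only [histExpect, Hist.sum_succ, histProb_snoc, Finset.mul_sum, mul_assoc]

theorem histExpect_add {k : ℕ} (F G : Hist n k → ℝ) :
    histExpect P k (fun s => F s + G s) = histExpect P k F + histExpect P k G := by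
  simp only [histExpect, mul_add, Finset.sum_add_distrib]

variable {P}

theorem probOf_nonneg (hP0 : ∀ R, 0 ≤ P R) (i : Fin n) : 0 ≤ probOf P i :=
  Finset.sum_nonneg fun R _ => by split_ifs <;> simp [hP0 R]

theorem histProb_nonneg (hP0 : ∀ R, 0 ≤ P R) {k : ℕ} (s : Hist n k) : 0 ≤ histProb P s :=
  Finset.prod_nonneg fun _ _ => hP0 _

theorem histExpect_mono (hP0 : ∀ R, 0 ≤ P R) {k : ℕ} {F G : Hist n k → ℝ} (h : ∀ s, F s ≤ G s) :
    histExpect P k F ≤ histExpect P k G :=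
  Finset.sum_le_sum fun s _ => mul_le_mul_of_nonneg_left (h s) (histProb_nonneg hP0 s)

theorem histExpect_nonneg (hP0 : ∀ R, 0 ≤ P R) {k : ℕ} {F : Hist n k → ℝ} (h : ∀ s, 0 ≤ F s) :
    0 ≤ histExpect P k F :=
  Finset.sum_nonneg fun s _ => mul_nonneg (histProb_nonneg hP0 s) (h s)

end Histories

section Lyapunov

variable {n : ℕ} {P : Finset (Fin n) → ℝ}

theorem sum_histExpect_le_of_lyapunov (hP0 : ∀ R, 0 ≤ P R) {Φ D r : ∀ k, Hist n k → ℝ}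
    (hstep : ∀ k s, ∑ R, P R * Φ (k + 1) (Fin.snoc s R) + D k s ≤ Φ k s + r k s)
    (hr : ∀ k, histExpect P k (r k) ≤ 0) (hΦr : ∀ k s, 0 ≤ Φ k s + r k s) (K : ℕ) :
    ∑ k ∈ Finset.range K, histExpect P k (D k) ≤ histExpect P 0 (Φ 0) := by
  have hdecr : ∀ k, histExpect P (k + 1) (Φ (k + 1)) + histExpect P k (D k)
      ≤ histExpect P k (Φ k) := fun k => by
    have := histExpect_mono hP0 (hstep k)
    rw [histExpect_add, histExpect_add, ← histExpect_succ] at this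
    linarith [hr k]
  have htele : ∀ K, ∑ k ∈ Finset.range K, histExpect P k (D k) + histExpect P K (Φ K)
      ≤ histExpect P 0 (Φ 0) := fun K => by
    induction K with
    | zero => simp
    | succ K ih => rw [Finset.sum_range_succ]; linarith [hdecr K]
  have hΦK : 0 ≤ histExpect P K (Φ K) := by
    have := histExpect_nonneg hP0 (hΦr K)
    rw [histExpect_add] at this
    linarith [hr K]
  linarith [htele K]

variable [MeasurableSpace (Finset (Fin n))] {μ : Measure (ℕ → Finset (Fin n))}
  [IsFiniteMeasure μ]

theorem measure_le_histExpect_div (hP0 : ∀ R, 0 ≤ P R)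
    (hμ : ∀ (K : ℕ) (s : Hist n K),
      (μ {ω : ℕ → Finset (Fin n) | ∀ j : Fin K, ω (j : ℕ) = s j}).toReal = histProb P s)
    {k : ℕ} {F : Hist n k → ℝ} (hF : ∀ s, 0 ≤ F s) {ε : ℝ} (hε : 0 < ε) :
    μ {ω | ε ≤ F fun j => ω (j : ℕ)} ≤ ENNReal.ofReal (histExpect P k F / ε) := by
  classical
  -- the cylinder sets need not be measurable: only monotonicity and subadditivity are used
  set large := Finset.univ.filter fun s : Hist n k => ε ≤ F s
  have hsub : {ω : ℕ → Finset (Fin n) | ε ≤ F fun j => ω (j : ℕ)}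
      ⊆ ⋃ s ∈ large, {ω | ∀ j : Fin k, ω (j : ℕ) = s j} := fun ω hω =>
    Set.mem_biUnion (Finset.mem_coe.mpr (Finset.mem_filter.mpr ⟨Finset.mem_univ _, hω⟩))
      fun _ => rfl
  have hprob : ∑ s ∈ large, histProb P s ≤ histExpect P k F / ε := by
    rw [le_div_iff₀ hε, Finset.sum_mul]
    calc ∑ s ∈ large, histProb P s * ε ≤ ∑ s ∈ large, histProb P s * F s :=
          Finset.sum_le_sum fun s hs => mul_le_mul_of_nonneg_left
            (Finset.mem_filter.mp hs).2 (histProb_nonneg hP0 s)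
      _ ≤ histExpect P k F := Finset.sum_le_sum_of_subset_of_nonneg (Finset.subset_univ _)
          fun s _ _ => mul_nonneg (histProb_nonneg hP0 s) (hF s)
  calc μ {ω | ε ≤ F fun j => ω (j : ℕ)}
      ≤ ∑ s ∈ large, μ {ω | ∀ j : Fin k, ω (j : ℕ) = s j} :=
        (measure_mono hsub).trans (measure_biUnion_finset_le _ _)
    _ = ENNReal.ofReal (∑ s ∈ large, histProb P s) := by
        rw [ENNReal.ofReal_sum_of_nonneg fun s _ => histProb_nonneg hP0 s]
        exact Finset.sum_congr rfl fun s _ => by rw [← hμ, ENNReal.ofReal_toReal (by simp)]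
    _ ≤ ENNReal.ofReal (histExpect P k F / ε) := ENNReal.ofReal_le_ofReal hprob

theorem ae_tendsto_zero_of_sum_histExpect_le (hP0 : ∀ R, 0 ≤ P R)
    (hμ : ∀ (K : ℕ) (s : Hist n K),
      (μ {ω : ℕ → Finset (Fin n) | ∀ j : Fin K, ω (j : ℕ) = s j}).toReal = histProb P s)
    {F : ∀ k, Hist n k → ℝ} (hF : ∀ k s, 0 ≤ F k s) {M : ℝ}
    (hM : ∀ K, ∑ k ∈ Finset.range K, histExpect P k (F k) ≤ M) :
    ∀ᵐ ω ∂μ, Filter.Tendsto (fun k => F k fun j => ω (j : ℕ)) Filter.atTop (nhds 0) := by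
  have hsum : Summable fun k => histExpect P k (F k) :=
    summable_of_sum_range_le (fun k => histExpect_nonneg hP0 (hF k)) hM
  have heventually : ∀ m : ℕ, ∀ᵐ ω ∂μ, ∀ᶠ k in Filter.atTop,
      ω ∉ {ω : ℕ → Finset (Fin n) | 1 / (m + 1 : ℝ) ≤ F k fun j => ω (j : ℕ)} := fun m => by
    have hε : (0 : ℝ) < 1 / (m + 1) := by positivity
    refine ae_eventually_notMem <| ne_top_of_le_ne_top
      (ENNReal.ofReal_ne_top (r := ∑' k, histExpect P k (F k) / (1 / (m + 1)))) ?_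
    rw [ENNReal.ofReal_tsum_of_nonneg (fun k => div_nonneg (histExpect_nonneg hP0 (hF k)) hε.le)
      (hsum.div_const _)]
    exact ENNReal.tsum_le_tsum fun k => measure_le_histExpect_div hP0 hμ (hF k) hε
  filter_upwards [ae_all_iff.mpr heventually] with ω hω
  refine tendsto_order.mpr ⟨fun a ha => Filter.Eventually.of_forall fun k => ha.trans_le
    (hF k _), fun a ha => ?_⟩
  obtain ⟨m, hm⟩ := exists_nat_one_div_lt ha
  filter_upwards [hω m] with k hk
  exact (not_le.mp hk).trans hm

end Lyapunov

section Product

variable {n : ℕ} {X : Type*} [NormedAddCommGroup X] [InnerProductSpace ℝ X] [CompleteSpace X]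
  {Y : Fin n → Type*} [∀ i, NormedAddCommGroup (Y i)] [∀ i, InnerProductSpace ℝ (Y i)]
  [∀ i, CompleteSpace (Y i)]
  (A : ∀ i, X →L[ℝ] Y i) (g : X → ℝ) (fstar : ∀ i, Y i → ℝ) (Tinv : X →L[ℝ] X)
  (Sinv : ∀ i, Y i →L[ℝ] Y i) (p : Fin n → ℝ) (xs : X) (ys : ∀ i, Y i)

theorem inner_sum_adjoint (u : X) (v : ∀ i, Y i) :
    ⟪u, ∑ i, ContinuousLinearMap.adjoint (A i) (v i)⟫ = ∑ i, ⟪A i u, v i⟫ := by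
  simp only [inner_sum, ContinuousLinearMap.adjoint_inner_right]

theorem sum_adjoint_inner (v : ∀ i, Y i) (u : X) :
    ⟪∑ i, ContinuousLinearMap.adjoint (A i) (v i), u⟫ = ∑ i, ⟪A i u, v i⟫ := by
  rw [real_inner_comm, inner_sum_adjoint]

/-- `D_h^q(w, w♯)` for `h(x, y) = g x + ∑ i, f_i*(y_i)` and `q = (-A* y♯, A x♯)`. -/
noncomputable def saddleBregman (x : X) (y : ∀ i, Y i) : ℝ :=
  bregman g (-∑ i, ContinuousLinearMap.adjoint (A i) (ys i)) xs x
    + ∑ i, bregman (fstar i) (A i xs) (ys i) (y i)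

theorem saddleBregman_nonneg
    (hgs : ∀ u, g xs + ⟪-∑ i, ContinuousLinearMap.adjoint (A i) (ys i), u - xs⟫ ≤ g u)
    (hfs : ∀ i u, fstar i (ys i) + ⟪A i xs, u - ys i⟫ ≤ fstar i u) (x : X) (y : ∀ i, Y i) :
    0 ≤ saddleBregman A g fstar xs ys x y :=
  add_nonneg (bregman_nonneg hgs x) (Finset.sum_nonneg fun i _ => bregman_nonneg (hfs i) _)

noncomputable def spdhgLyapunov (x : X) (y d : ∀ i, Y i) : ℝ :=
  1 / 2 * ⟪Tinv (x - xs), x - xs⟫ + bregman g (-∑ i, ContinuousLinearMap.adjoint (A i) (ys i)) xs x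
    + ∑ i, blockLyapunov (A i) (fstar i) (Sinv i) (p i) xs (ys i) x (y i) (d i)

noncomputable def couplingEnergy (Tsqrt : X →L[ℝ] X) (d : ∀ i, Y i) : ℝ :=
  1 / 2 * ‖Tsqrt (∑ i, ContinuousLinearMap.adjoint (A i) (d i))‖ ^ 2

noncomputable def dualStepEnergy (d : ∀ i, Y i) : ℝ :=
  ∑ i, p i / 2 * ⟪Sinv i (d i), d i⟫

theorem sum_mul_spdhgLyapunov_piecewise {P : Finset (Fin n) → ℝ} (hP1 : ∑ R, P R = 1)
    (x : X) (yhat y δ : ∀ i, Y i) :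
    ∑ R, P R * spdhgLyapunov A g fstar Tinv Sinv (probOf P) xs ys x (R.piecewise yhat y)
        (R.piecewise δ 0)
      = 1 / 2 * ⟪Tinv (x - xs), x - xs⟫
        + bregman g (-∑ i, ContinuousLinearMap.adjoint (A i) (ys i)) xs x
        + ∑ i, (probOf P i
            * blockLyapunov (A i) (fstar i) (Sinv i) (probOf P i) xs (ys i) x (yhat i) (δ i)
          + (1 - probOf P i)
            * blockLyapunov (A i) (fstar i) (Sinv i) (probOf P i) xs (ys i) x (y i) 0) := by
  classical
  have hblock : ∀ R : Finset (Fin n), ∀ i,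
      blockLyapunov (A i) (fstar i) (Sinv i) (probOf P i) xs (ys i) x
          (R.piecewise yhat y i) (R.piecewise δ 0 i)
        = R.piecewise
            (fun i =>
              blockLyapunov (A i) (fstar i) (Sinv i) (probOf P i) xs (ys i) x (yhat i) (δ i))
            (fun i => blockLyapunov (A i) (fstar i) (Sinv i) (probOf P i) xs (ys i) x (y i) 0) i :=
    fun R i => by by_cases hi : i ∈ R <;> simp [hi]
  simp only [spdhgLyapunov, hblock, mul_add, Finset.sum_add_distrib, ← Finset.sum_mul, hP1,
    one_mul]
  rw [sum_mul_sum_piecewise P hP1, Finset.sum_add_distrib]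

theorem spdhgLyapunov_step {P : Finset (Fin n) → ℝ} {T Tsqrt : X →L[ℝ] X}
    {S : ∀ i, Y i →L[ℝ] Y i} {x x' : X} {y ybar yhat : ∀ i, Y i}
    (hx : IsProx Tinv g (x - T (∑ i, ContinuousLinearMap.adjoint (A i) (ybar i))) x')
    (hy : ∀ i, IsProx (Sinv i) (fstar i) (y i + S i (A i x')) (yhat i))
    (hg : ConvexOn ℝ Set.univ g) (hfstar : ∀ i, ConvexOn ℝ Set.univ (fstar i))
    (hTinv : IsSelfAdjoint Tinv) (hTinvT : ∀ u, Tinv (T u) = u) (hTTinv : ∀ u, T (Tinv u) = u)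
    (hTsqrt : IsSelfAdjoint Tsqrt) (hTsq : Tsqrt.comp Tsqrt = T)
    (hSinv : ∀ i, IsSelfAdjoint (Sinv i)) (hSinvS : ∀ i u, Sinv i (S i u) = u)
    (hP1 : ∑ R, P R = 1) (hp : ∀ i, probOf P i ≠ 0) :
    ∑ R, P R * spdhgLyapunov A g fstar Tinv Sinv (probOf P) xs ys x' (R.piecewise yhat y)
          (R.piecewise (fun i => (probOf P i)⁻¹ • (yhat i - y i)) 0)
        + saddleBregman A g fstar xs ys x y
      ≤ spdhgLyapunov A g fstar Tinv Sinv (probOf P) xs ys x y (ybar - y)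
        + (couplingEnergy A Tsqrt (ybar - y) - dualStepEnergy Sinv (probOf P) (ybar - y)) := by
  rw [sum_mul_spdhgLyapunov_piecewise A g fstar Tinv Sinv xs ys hP1]
  have hprimal := hx.three_point_sub_map hTinv hTinvT hg xs
  have hdual := Finset.sum_le_sum fun i (_ : i ∈ Finset.univ) =>
    blockLyapunov_step (A i) (fstar i) (Sinv i) (probOf P i) xs (ys i) (x := x) (ybar := ybar i)
      (hy i) (hSinv i) (hSinvS i) (hfstar i) (hp i)
  have hyoung := inner_le_half_inv_add_half_sqrt hTsqrt hTsq hTTinv (x - x')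
    (∑ i, ContinuousLinearMap.adjoint (A i) ((ybar - y) i))
  simp only [Finset.sum_add_distrib, Finset.sum_sub_distrib] at hdual
  rw [inner_sum_adjoint] at hprimal hyoung
  simp only [spdhgLyapunov, saddleBregman, couplingEnergy, dualStepEnergy, bregman,
    inner_neg_left, sum_adjoint_inner, Pi.sub_apply, Finset.sum_add_distrib]
    at hdual hprimal hyoung ⊢
  have hsplit : ∑ i, ⟪A i (x' - xs), ybar i - ys i⟫
      = ∑ i, ⟪A i (x' - xs), ybar i⟫ - ∑ i, ⟪A i (x' - xs), ys i⟫ := by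
    simp only [inner_sub_right, Finset.sum_sub_distrib]
  have hflip : ∑ i, ⟪A i (x - x'), ybar i - y i⟫ = -∑ i, ⟪A i (x' - x), ybar i - y i⟫ := by
    simp only [← Finset.sum_neg_distrib, ← inner_neg_left, ← map_neg, neg_sub]
  linarith [inner_map_sub_comm Tinv x x']

theorem spdhgLyapunov_add_couplingEnergy_sub_nonneg {T Tsqrt : X →L[ℝ] X}
    (hTTinv : ∀ u, T (Tinv u) = u)
    (hTsqrt : IsSelfAdjoint Tsqrt) (hTsq : Tsqrt.comp Tsqrt = T)
    (hSinv : ∀ i u, 0 ≤ ⟪Sinv i u, u⟫) (hp : ∀ i, 0 < p i)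
    (hgs : ∀ u, g xs + ⟪-∑ i, ContinuousLinearMap.adjoint (A i) (ys i), u - xs⟫ ≤ g u)
    (hfs : ∀ i u, fstar i (ys i) + ⟪A i xs, u - ys i⟫ ≤ fstar i u) (x : X) (y d : ∀ i, Y i) :
    0 ≤ spdhgLyapunov A g fstar Tinv Sinv p xs ys x y d
      + (couplingEnergy A Tsqrt d - dualStepEnergy Sinv p d) := by
  have hyoung := inner_le_half_inv_add_half_sqrt hTsqrt hTsq hTTinv (x - xs)
    (∑ i, ContinuousLinearMap.adjoint (A i) (d i))
  rw [inner_sum_adjoint] at hyoung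
  have hdual : 0 ≤ ∑ i, (p i)⁻¹ * (1 / 2 * ⟪Sinv i (y i - ys i), y i - ys i⟫
      + bregman (fstar i) (A i xs) (ys i) (y i)) := Finset.sum_nonneg fun i _ =>
    mul_nonneg (inv_nonneg.mpr (hp i).le)
      (add_nonneg (mul_nonneg (by norm_num) (hSinv i _)) (bregman_nonneg (hfs i) _))
  have hprimal := bregman_nonneg hgs x
  simp only [spdhgLyapunov, couplingEnergy, dualStepEnergy, blockLyapunov,
    Finset.sum_add_distrib, Finset.sum_sub_distrib]
  linarith

theorem sum_mul_couplingEnergy_piecewise_le {P : Finset (Fin n) → ℝ} {Tsqrt : X →L[ℝ] X}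
    {S Ssqrt : ∀ i, Y i →L[ℝ] Y i} {v : Fin n → ℝ} (hP0 : ∀ R, 0 ≤ P R) (hP1 : ∑ R, P R = 1)
    (hTsqrt : IsSelfAdjoint Tsqrt) (hSsqrt : ∀ i, IsSelfAdjoint (Ssqrt i))
    (hSsq : ∀ i, (Ssqrt i).comp (Ssqrt i) = S i) (hSSinv : ∀ i u, S i (Sinv i u) = u)
    (hSinv : ∀ i u, 0 ≤ ⟪Sinv i u, u⟫)
    (hESO : ∀ z : ∀ i, Y i, ∑ R : Finset (Fin n), P R *
        ‖∑ i ∈ R, ContinuousLinearMap.adjoint ((Ssqrt i).comp ((A i).comp Tsqrt)) (z i)‖ ^ 2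
      ≤ ∑ i, probOf P i * v i * ‖z i‖ ^ 2)
    (hv : ∀ i, v i ≤ probOf P i) (δ : ∀ i, Y i) :
    ∑ R, P R * couplingEnergy A Tsqrt (R.piecewise δ 0)
      ≤ ∑ R, P R * dualStepEnergy Sinv (probOf P) (R.piecewise δ 0) := by
  classical
  set z : ∀ i, Y i := fun i => Ssqrt i (Sinv i (δ i))
  have hadj : ∀ i, ContinuousLinearMap.adjoint ((Ssqrt i).comp ((A i).comp Tsqrt)) (z i)
      = Tsqrt (ContinuousLinearMap.adjoint (A i) (δ i)) := fun i => by
    simp only [z, ContinuousLinearMap.adjoint_comp, hTsqrt.adjoint_eq, (hSsqrt i).adjoint_eq,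
      ContinuousLinearMap.comp_apply]
    rw [← ContinuousLinearMap.comp_apply (Ssqrt i), hSsq, hSSinv]
  have hcoupling : ∀ R : Finset (Fin n), couplingEnergy A Tsqrt (R.piecewise δ 0)
      = 1 / 2 * ‖∑ i ∈ R,
          ContinuousLinearMap.adjoint ((Ssqrt i).comp ((A i).comp Tsqrt)) (z i)‖ ^ 2 := fun R => by
    simp only [couplingEnergy, hadj, ← map_sum, Finset.piecewise, apply_ite, Pi.zero_apply,
      map_zero, Finset.sum_ite_mem, Finset.univ_inter]
  have hnorm : ∀ i, ‖z i‖ ^ 2 = ⟪Sinv i (δ i), δ i⟫ := fun i => by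
    rw [norm_map_sq_of_comp_self (hSsqrt i) (hSsq i), hSSinv, real_inner_comm]
  have henergy : ∑ R, P R * dualStepEnergy Sinv (probOf P) (R.piecewise δ 0)
      = ∑ i, probOf P i * (probOf P i / 2 * ⟪Sinv i (δ i), δ i⟫) := by
    have : ∀ R : Finset (Fin n), dualStepEnergy Sinv (probOf P) (R.piecewise δ 0)
        = ∑ i, R.piecewise (fun i => probOf P i / 2 * ⟪Sinv i (δ i), δ i⟫) 0 i := fun R =>
      Finset.sum_congr rfl fun i _ => by by_cases hi : i ∈ R <;> simp [hi]
    simp only [this, sum_mul_sum_piecewise P hP1, Pi.zero_apply, mul_zero, add_zero]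
  calc ∑ R, P R * couplingEnergy A Tsqrt (R.piecewise δ 0)
      = 1 / 2 * ∑ R, P R * ‖∑ i ∈ R,
          ContinuousLinearMap.adjoint ((Ssqrt i).comp ((A i).comp Tsqrt)) (z i)‖ ^ 2 := by
        simp only [hcoupling, Finset.mul_sum]; ring_nf
    _ ≤ 1 / 2 * ∑ i, probOf P i * v i * ⟪Sinv i (δ i), δ i⟫ := by
        simpa only [hnorm] using
          mul_le_mul_of_nonneg_left (hESO z) (by norm_num : (0 : ℝ) ≤ 1 / 2)
    _ ≤ ∑ R, P R * dualStepEnergy Sinv (probOf P) (R.piecewise δ 0) := by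
        rw [henergy, Finset.mul_sum]
        refine Finset.sum_le_sum fun i _ => ?_
        have := mul_le_mul_of_nonneg_right (mul_le_mul_of_nonneg_left (hv i)
          (probOf_nonneg hP0 i)) (hSinv i (δ i))
        linarith

end Product

section Iterates

variable {n : ℕ} {X : Type*} [NormedAddCommGroup X] [InnerProductSpace ℝ X] [CompleteSpace X]
  {Y : Fin n → Type*} [∀ i, NormedAddCommGroup (Y i)] [∀ i, InnerProductSpace ℝ (Y i)]
  [∀ i, CompleteSpace (Y i)]

/-- SPDHG with extrapolation `θ = 1`, its iterates indexed by the history of sampled sets. -/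
structure IsSPDHGRun (A : ∀ i, X →L[ℝ] Y i) (g : X → ℝ) (fstar : ∀ i, Y i → ℝ)
    (T Tinv : X →L[ℝ] X) (S Sinv : ∀ i, Y i →L[ℝ] Y i) (P : Finset (Fin n) → ℝ)
    (x : ∀ k, Hist n k → X) (y ybar : ∀ k, Hist n k → ∀ i, Y i) : Prop where
  ybar_zero : ybar 0 = y 0
  x_succ : ∀ k (s : Hist n (k + 1)), IsProx Tinv g
    (x k (histRes s) - T (∑ i, ContinuousLinearMap.adjoint (A i) (ybar k (histRes s) i)))
    (x (k + 1) s)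
  y_succ_of_mem : ∀ k (s : Hist n (k + 1)) i, i ∈ s (Fin.last k) →
    IsProx (Sinv i) (fstar i) (y k (histRes s) i + S i (A i (x (k + 1) s))) (y (k + 1) s i)
  y_succ_of_notMem : ∀ k (s : Hist n (k + 1)) i, i ∉ s (Fin.last k) →
    y (k + 1) s i = y k (histRes s) i
  ybar_succ : ∀ k (s : Hist n (k + 1)) i,
    ybar (k + 1) s i = y (k + 1) s i + (probOf P i)⁻¹ • (y (k + 1) s i - y k (histRes s) i)

namespace IsSPDHGRun

variable {A : ∀ i, X →L[ℝ] Y i} {g : X → ℝ} {fstar : ∀ i, Y i → ℝ} {T Tinv : X →L[ℝ] X}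
  {S Sinv : ∀ i, Y i →L[ℝ] Y i} {P : Finset (Fin n) → ℝ} {x : ∀ k, Hist n k → X}
  {y ybar : ∀ k, Hist n k → ∀ i, Y i}

theorem x_succ_snoc (h : IsSPDHGRun A g fstar T Tinv S Sinv P x y ybar)
    (hg : ConvexOn ℝ Set.univ g) (hTinv : IsSelfAdjoint Tinv)
    (hTinvpos : ∀ u, u ≠ 0 → 0 < ⟪Tinv u, u⟫) {k : ℕ} (s : Hist n k) (R : Finset (Fin n)) :
    x (k + 1) (Fin.snoc s R) = x (k + 1) (Fin.snoc s Finset.univ) := by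
  have hR := h.x_succ k (Fin.snoc s R)
  have huniv := h.x_succ k (Fin.snoc s Finset.univ)
  rw [histRes_snoc] at hR huniv
  exact hR.eq huniv hTinv hTinvpos hg

theorem y_succ_snoc (h : IsSPDHGRun A g fstar T Tinv S Sinv P x y ybar)
    (hg : ConvexOn ℝ Set.univ g) (hfstar : ∀ i, ConvexOn ℝ Set.univ (fstar i))
    (hTinv : IsSelfAdjoint Tinv) (hTinvpos : ∀ u, u ≠ 0 → 0 < ⟪Tinv u, u⟫)
    (hSinv : ∀ i, IsSelfAdjoint (Sinv i)) (hSinvpos : ∀ i u, u ≠ 0 → 0 < ⟪Sinv i u, u⟫)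
    {k : ℕ} (s : Hist n k) (R : Finset (Fin n)) :
    y (k + 1) (Fin.snoc s R) = R.piecewise (y (k + 1) (Fin.snoc s Finset.univ)) (y k s) := by
  classical
  funext i
  by_cases hi : i ∈ R
  · have hR := h.y_succ_of_mem k (Fin.snoc s R) i (by simpa using hi)
    have huniv := h.y_succ_of_mem k (Fin.snoc s Finset.univ) i (by simp)
    rw [histRes_snoc, h.x_succ_snoc hg hTinv hTinvpos] at hR
    rw [histRes_snoc] at huniv
    rw [Finset.piecewise_eq_of_mem _ _ _ hi]
    exact hR.eq huniv (hSinv i) (hSinvpos i) (hfstar i)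
  · rw [Finset.piecewise_eq_of_notMem _ _ _ hi, h.y_succ_of_notMem k _ i (by simpa using hi),
      histRes_snoc]

theorem ybar_sub_y_snoc (h : IsSPDHGRun A g fstar T Tinv S Sinv P x y ybar)
    (hg : ConvexOn ℝ Set.univ g) (hfstar : ∀ i, ConvexOn ℝ Set.univ (fstar i))
    (hTinv : IsSelfAdjoint Tinv) (hTinvpos : ∀ u, u ≠ 0 → 0 < ⟪Tinv u, u⟫)
    (hSinv : ∀ i, IsSelfAdjoint (Sinv i)) (hSinvpos : ∀ i u, u ≠ 0 → 0 < ⟪Sinv i u, u⟫)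
    {k : ℕ} (s : Hist n k) (R : Finset (Fin n)) :
    ybar (k + 1) (Fin.snoc s R) - y (k + 1) (Fin.snoc s R)
      = R.piecewise (fun i => (probOf P i)⁻¹ • (y (k + 1) (Fin.snoc s Finset.univ) i - y k s i))
          0 := by
  classical
  funext i
  rw [Pi.sub_apply, h.ybar_succ, add_sub_cancel_left, histRes_snoc,
    h.y_succ_snoc hg hfstar hTinv hTinvpos hSinv hSinvpos]
  by_cases hi : i ∈ R <;> simp [hi]

theorem lyapunov_step {Tsqrt : X →L[ℝ] X} (h : IsSPDHGRun A g fstar T Tinv S Sinv P x y ybar)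
    (hg : ConvexOn ℝ Set.univ g) (hfstar : ∀ i, ConvexOn ℝ Set.univ (fstar i))
    (hTinv : IsSelfAdjoint Tinv) (hTinvpos : ∀ u, u ≠ 0 → 0 < ⟪Tinv u, u⟫)
    (hSinv : ∀ i, IsSelfAdjoint (Sinv i)) (hSinvpos : ∀ i u, u ≠ 0 → 0 < ⟪Sinv i u, u⟫)
    (hTinvT : ∀ u, Tinv (T u) = u) (hTTinv : ∀ u, T (Tinv u) = u)
    (hTsqrt : IsSelfAdjoint Tsqrt) (hTsq : Tsqrt.comp Tsqrt = T)
    (hSinvS : ∀ i u, Sinv i (S i u) = u) (hP1 : ∑ R, P R = 1) (hp : ∀ i, 0 < probOf P i)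
    (xs : X) (ys : ∀ i, Y i) (k : ℕ) (s : Hist n k) :
    ∑ R, P R * spdhgLyapunov A g fstar Tinv Sinv (probOf P) xs ys (x (k + 1) (Fin.snoc s R))
          (y (k + 1) (Fin.snoc s R)) (ybar (k + 1) (Fin.snoc s R) - y (k + 1) (Fin.snoc s R))
        + saddleBregman A g fstar xs ys (x k s) (y k s)
      ≤ spdhgLyapunov A g fstar Tinv Sinv (probOf P) xs ys (x k s) (y k s) (ybar k s - y k s)
        + (couplingEnergy A Tsqrt (ybar k s - y k s)
          - dualStepEnergy Sinv (probOf P) (ybar k s - y k s)) := by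
  have hx := h.x_succ k (Fin.snoc s Finset.univ)
  have hy := fun i => h.y_succ_of_mem k (Fin.snoc s Finset.univ) i (by simp)
  simp only [histRes_snoc] at hx hy
  rw [Finset.sum_congr rfl fun R _ => by
    rw [h.ybar_sub_y_snoc hg hfstar hTinv hTinvpos hSinv hSinvpos s R,
      h.y_succ_snoc hg hfstar hTinv hTinvpos hSinv hSinvpos s R,
      h.x_succ_snoc hg hTinv hTinvpos s R]]
  exact spdhgLyapunov_step A g fstar Tinv Sinv xs ys hx hy hg hfstar hTinv hTinvT hTTinv hTsqrt
    hTsq hSinv hSinvS hP1 fun i => (hp i).ne'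

theorem histExpect_couplingEnergy_sub_le_zero {Tsqrt : X →L[ℝ] X} {Ssqrt : ∀ i, Y i →L[ℝ] Y i}
    {v : Fin n → ℝ} (h : IsSPDHGRun A g fstar T Tinv S Sinv P x y ybar)
    (hg : ConvexOn ℝ Set.univ g) (hfstar : ∀ i, ConvexOn ℝ Set.univ (fstar i))
    (hTinv : IsSelfAdjoint Tinv) (hTinvpos : ∀ u, u ≠ 0 → 0 < ⟪Tinv u, u⟫)
    (hSinv : ∀ i, IsSelfAdjoint (Sinv i)) (hSinvpos : ∀ i u, u ≠ 0 → 0 < ⟪Sinv i u, u⟫)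
    (hP0 : ∀ R, 0 ≤ P R) (hP1 : ∑ R, P R = 1)
    (hTsqrt : IsSelfAdjoint Tsqrt) (hSsqrt : ∀ i, IsSelfAdjoint (Ssqrt i))
    (hSsq : ∀ i, (Ssqrt i).comp (Ssqrt i) = S i) (hSSinv : ∀ i u, S i (Sinv i u) = u)
    (hESO : ∀ z : ∀ i, Y i, ∑ R : Finset (Fin n), P R *
        ‖∑ i ∈ R, ContinuousLinearMap.adjoint ((Ssqrt i).comp ((A i).comp Tsqrt)) (z i)‖ ^ 2
      ≤ ∑ i, probOf P i * v i * ‖z i‖ ^ 2)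
    (hv : ∀ i, v i ≤ probOf P i) (k : ℕ) :
    histExpect P k (fun s => couplingEnergy A Tsqrt (ybar k s - y k s)
      - dualStepEnergy Sinv (probOf P) (ybar k s - y k s)) ≤ 0 := by
  have hzero : ∀ k, histExpect P k (fun _ => 0) = 0 := fun k => by simp [histExpect]
  cases k with
  | zero =>
    refine (histExpect_mono hP0 fun s => ?_).trans (hzero 0).le
    simp [h.ybar_zero, couplingEnergy, dualStepEnergy]
  | succ k =>
    rw [histExpect_succ]
    refine (histExpect_mono hP0 fun s => ?_).trans (hzero k).le
    simp only [mul_sub, Finset.sum_sub_distrib, sub_nonpos,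
      h.ybar_sub_y_snoc hg hfstar hTinv hTinvpos hSinv hSinvpos s]
    exact sum_mul_couplingEnergy_piecewise_le A Sinv hP0 hP1 hTsqrt hSsqrt hSsq hSSinv
      (fun i u => inner_map_self_nonneg_of_pos (hSinvpos i) u) hESO hv _

end IsSPDHGRun

end Iterates

theorem spdhg_bregman_converges_almost_surely {n : ℕ}
    (X : Type*) [NormedAddCommGroup X] [InnerProductSpace ℝ X] [CompleteSpace X]
    (Y : Fin n → Type*) [∀ i, NormedAddCommGroup (Y i)] [∀ i, InnerProductSpace ℝ (Y i)]
    [∀ i, CompleteSpace (Y i)]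
    (A : ∀ i, X →L[ℝ] Y i) (g : X → ℝ) (fstar : ∀ i, Y i → ℝ)
    -- g and the f_i (hence the conjugates f_i*) are convex
    (hg : ConvexOn ℝ Set.univ g) (hfstar : ∀ i, ConvexOn ℝ Set.univ (fstar i))
    -- step size operators: self-adjoint, positive definite, with square roots and inverses
    (T Tsqrt Tinv : X →L[ℝ] X) (S Ssqrt Sinv : ∀ i, Y i →L[ℝ] Y i)
    (hT : IsSelfAdjoint T) (hTpos : ∀ x : X, x ≠ 0 → 0 < ⟪T x, x⟫)
    (hTsqrt : IsSelfAdjoint Tsqrt) (hTsq : Tsqrt.comp Tsqrt = T)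
    (hTinv : Tinv.comp T = ContinuousLinearMap.id ℝ X ∧
      T.comp Tinv = ContinuousLinearMap.id ℝ X)
    (hS : ∀ i, IsSelfAdjoint (S i)) (hSpos : ∀ i, ∀ u : Y i, u ≠ 0 → 0 < ⟪S i u, u⟫)
    (hSsqrt : ∀ i, IsSelfAdjoint (Ssqrt i)) (hSsq : ∀ i, (Ssqrt i).comp (Ssqrt i) = S i)
    (hSinv : ∀ i, (Sinv i).comp (S i) = ContinuousLinearMap.id ℝ (Y i) ∧
      (S i).comp (Sinv i) = ContinuousLinearMap.id ℝ (Y i))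
    -- the sampling distribution: proper
    (P : Finset (Fin n) → ℝ) (hP0 : ∀ R, 0 ≤ P R) (hP1 : ∑ R : Finset (Fin n), P R = 1)
    (hp : ∀ i, 0 < probOf P i)
    -- ESO parameters of S^{1/2} A T^{1/2} with v_i < p_i
    (v : Fin n → ℝ)
    (hESO : ∀ z : ∀ i, Y i,
      ∑ R : Finset (Fin n), P R *
        ‖∑ i ∈ R, (ContinuousLinearMap.adjoint ((Ssqrt i).comp ((A i).comp Tsqrt))) (z i)‖ ^ 2
      ≤ ∑ i, probOf P i * v i * ‖z i‖ ^ 2)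
    (hv : ∀ i, v i < probOf P i)
    -- a saddle point w♯ = (x♯, y♯): −A* y♯ ∈ ∂g(x♯), A_i x♯ ∈ ∂f_i*(y♯_i)
    (xs : X) (ys : ∀ i, Y i)
    (hgs : ∀ u : X,
      g xs + ⟪-(∑ i, (ContinuousLinearMap.adjoint (A i)) (ys i)), u - xs⟫ ≤ g u)
    (hfs : ∀ i, ∀ u : Y i, fstar i (ys i) + ⟪A i xs, u - ys i⟫ ≤ fstar i u)
    -- the SPDHG iterates, as functions of the sampling history, with θ = 1
    (θ : ℝ) (hθ : θ = 1)
    (x : ∀ k, Hist n k → X) (y ybar : ∀ k, Hist n k → ∀ i, Y i)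
    (hybar0 : ybar 0 = y 0)
    (hx : ∀ k (s : Hist n (k + 1)),
      IsProx Tinv g
        (x k (histRes s) - T (∑ i, (ContinuousLinearMap.adjoint (A i)) (ybar k (histRes s) i)))
        (x (k + 1) s))
    (hy : ∀ k (s : Hist n (k + 1)) i,
      (i ∈ s (Fin.last k) →
        IsProx (Sinv i) (fstar i) (y k (histRes s) i + S i (A i (x (k + 1) s)))
          (y (k + 1) s i)) ∧
      (i ∉ s (Fin.last k) → y (k + 1) s i = y k (histRes s) i))
    (hybar : ∀ k (s : Hist n (k + 1)) i,
      ybar (k + 1) s i =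
        y (k + 1) s i + (θ * (probOf P i)⁻¹) • (y (k + 1) s i - y k (histRes s) i))
    -- the law of the infinite i.i.d. sequence of samplings
    [MeasurableSpace (Finset (Fin n))]
    (μ : Measure (ℕ → Finset (Fin n))) [IsProbabilityMeasure μ]
    (hμ : ∀ (K : ℕ) (s : Hist n K),
      (μ {ω : ℕ → Finset (Fin n) | ∀ j : Fin K, ω (j : ℕ) = s j}).toReal = histProb P s) :
    -- D_h^q(w^{(k)}, w♯) → 0 almost surely
    ∀ᵐ ω ∂μ, Filter.Tendsto
      (fun k =>
        (g (x k (fun j => ω (j : ℕ))) - g xs -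
          ⟪-(∑ i, (ContinuousLinearMap.adjoint (A i)) (ys i)), x k (fun j => ω (j : ℕ)) - xs⟫) +
        ∑ i, (fstar i (y k (fun j => ω (j : ℕ)) i) - fstar i (ys i) -
          ⟪A i xs, y k (fun j => ω (j : ℕ)) i - ys i⟫))
      Filter.atTop (nhds 0) := by
  have hTTinv : ∀ u, T (Tinv u) = u := fun u => DFunLike.congr_fun hTinv.2 u
  have hTinvT : ∀ u, Tinv (T u) = u := fun u => DFunLike.congr_fun hTinv.1 u
  have hSSinv : ∀ i u, S i (Sinv i u) = u := fun i u => DFunLike.congr_fun (hSinv i).2 u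
  have hSinvS : ∀ i u, Sinv i (S i u) = u := fun i u => DFunLike.congr_fun (hSinv i).1 u
  have hTinvSA := isSelfAdjoint_of_rightInverse hT hTTinv
  have hSinvSA := fun i => isSelfAdjoint_of_rightInverse (hS i) (hSSinv i)
  have hTinvpos := fun u => inner_map_self_pos_of_rightInverse hTpos hTTinv (u := u)
  have hSinvpos := fun i u => inner_map_self_pos_of_rightInverse (hSpos i) (hSSinv i) (u := u)
  have hrun : IsSPDHGRun A g fstar T Tinv S Sinv P x y ybar :=
    ⟨hybar0, hx, fun k s i => (hy k s i).1, fun k s i => (hy k s i).2,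
      fun k s i => by rw [hybar, hθ, one_mul]⟩
  have hsummable := sum_histExpect_le_of_lyapunov hP0
    (hrun.lyapunov_step hg hfstar hTinvSA hTinvpos hSinvSA hSinvpos hTinvT hTTinv hTsqrt hTsq
      hSinvS hP1 hp xs ys)
    (hrun.histExpect_couplingEnergy_sub_le_zero hg hfstar hTinvSA hTinvpos hSinvSA hSinvpos hP0
      hP1 hTsqrt hSsqrt hSsq hSSinv hESO fun i => (hv i).le)
    fun k s => spdhgLyapunov_add_couplingEnergy_sub_nonneg A g fstar Tinv Sinv (probOf P) xs ys
      hTTinv hTsqrt hTsq (fun i => inner_map_self_nonneg_of_pos (hSinvpos i)) hp hgs hfs _ _ _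
  exact ae_tendsto_zero_of_sum_histExpect_le hP0 hμ
    (fun k s => saddleBregman_nonneg A g fstar xs ys hgs hfs (x k s) (y k s)) hsummable
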